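/- Let R = x_v x̄_v ⋯ x_1 x̄_1 and let W = c_1 c_2 ⋯ c_v with each c_j ∈ {x_j, x̄_j}. Then W is a subsequence of R^v but W is not a subsequence of R^{v−1}. -/

import Mathlib

/-- The character `(j, true)` stands for `x_j` and `(j, false)` for `x̄_j`. -/
def Rstr (v : ℕ) : List (ℕ × Bool) :=
  List.flatten (((List.range v).reverse).map fun j => [(j + 1, true), (j + 1, false)])

/-- k-fold concatenation of `Rstr v`. -/
def Rpow (v k : ℕ) : List (ℕ × Bool) :=
  List.flatten (List.replicate k (Rstr v))

lemma Rstr_succ (v : ℕ) :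
    Rstr (v + 1) = (v + 1, true) :: (v + 1, false) :: Rstr v := by
  unfold Rstr
  rw [List.range_succ, List.reverse_append]
  simp

lemma mem_Rstr_le {a : ℕ × Bool} {v : ℕ} (h : a ∈ Rstr v) : a.1 ≤ v := by
  induction v with
  | zero => simp [Rstr] at h
  | succ n ih =>
    rw [Rstr_succ, List.mem_cons, List.mem_cons] at h
    rcases h with rfl | rfl | h
    · simp
    · simp
    · exact le_trans (ih h) (Nat.le_succ n)

lemma mem_Rstr {j : ℕ} {b : Bool} {v : ℕ} (h1 : 1 ≤ j) (h2 : j ≤ v) :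
    (j, b) ∈ Rstr v := by
  induction v with
  | zero => omega
  | succ n ih =>
    rw [Rstr_succ]
    rcases Nat.lt_or_ge j (n + 1) with h | h
    · exact List.mem_cons_of_mem _ (List.mem_cons_of_mem _ (ih (by omega)))
    · have : j = n + 1 := by omega
      subst this
      cases b
      · exact List.mem_cons_of_mem _ List.mem_cons_self
      · exact List.mem_cons_self

lemma Rstr_pairwise (v : ℕ) :
    (Rstr v).Pairwise (fun a b => b.1 ≤ a.1) := by
  induction v with
  | zero => simp [Rstr]
  | succ n ih =>
    rw [Rstr_succ]
    refine List.Pairwise.cons ?_ (List.Pairwise.cons ?_ ih)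
    · intro b hb
      rcases List.mem_cons.mp hb with rfl | h
      · simp
      · exact le_trans (mem_Rstr_le h) (Nat.le_succ n)
    · intro b hb
      exact le_trans (mem_Rstr_le hb) (Nat.le_succ n)

lemma sublist_flatten_replicate {α : Type*} (W : List α) (L : List α) :
    ∀ k, (∀ a ∈ W, a ∈ L) → W.length ≤ k →
      W.Sublist (List.flatten (List.replicate k L)) := by
  induction W with
  | nil => intro k _ _; simp
  | cons a t ih =>
    intro k hmem hlen
    cases k with
    | zero => simp at hlen
    | succ k' =>
      rw [List.replicate_succ, List.flatten_cons]
      have h1 : [a].Sublist L := List.singleton_sublist.mpr (hmem a (by simp))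
      have h2 : t.Sublist (List.flatten (List.replicate k' L)) :=
        ih k' (fun x hx => hmem x (by simp [hx])) (by simpa using hlen)
      simpa using h1.append h2

lemma length_le_of_sublist_flatten {α : Type*} (R : α → α → Prop) (L : List α)
    (hL : L.Pairwise R) :
    ∀ (k : ℕ) (W : List α), W.Pairwise (fun a b => ¬ R a b) →
      W.Sublist (List.flatten (List.replicate k L)) → W.length ≤ k := by
  intro k
  induction k with
  | zero =>
    intro W _ hsub
    simp only [List.replicate_zero, List.flatten_nil, List.sublist_nil] at hsub
    simp [hsub]
  | succ k' ih =>
    intro W hW hsub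
    rw [List.replicate_succ, List.flatten_cons] at hsub
    obtain ⟨W₁, W₂, heq, h1, h2⟩ := List.sublist_append_iff.mp hsub
    subst heq
    have hlen1 : W₁.length ≤ 1 := by
      have hp : W₁.Pairwise R := hL.sublist h1
      have hp' : W₁.Pairwise (fun a b => ¬ R a b) :=
        (List.pairwise_append.mp hW).1
      match W₁ with
      | [] => simp
      | [_] => simp
      | a :: b :: t =>
        exfalso
        have hab : R a b := (List.pairwise_cons.mp hp).1 b (by simp)
        exact (List.pairwise_cons.mp hp').1 b (by simp) hab
    have hlen2 : W₂.length ≤ k' :=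
      ih W₂ (List.pairwise_append.mp hW).2.1 h2
    simp only [List.length_append]
    omega

lemma W_pairwise (W : List (ℕ × Bool))
    (hW : ∀ m : Fin W.length, (W.get m).1 = (m : ℕ) + 1) :
    W.Pairwise (fun a b => a.1 < b.1) := by
  rw [List.pairwise_iff_get]
  intro i j hij
  rw [hW i, hW j]
  omega

/-- A string W = c_1 ⋯ c_v with c_j ∈ {x_j, x̄_j} is a subsequence
of R^v but not of R^{v-1}, where R = x_v x̄_v ⋯ x_1 x̄_1. -/
theorem stmt_6 (v : ℕ) (hv : 1 ≤ v) (W : List (ℕ × Bool))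
    (hlen : W.length = v)
    (hW : ∀ m : Fin W.length, (W.get m).1 = (m : ℕ) + 1) :
    W.Sublist (Rpow v v) ∧ ¬ W.Sublist (Rpow v (v - 1)) := by
  have hmem : ∀ a ∈ W, a ∈ Rstr v := by
    intro a ha
    obtain ⟨m, rfl⟩ := List.mem_iff_get.mp ha
    have h := hW m
    have hm : (m : ℕ) < v := by rw [← hlen]; exact m.2
    have hb : ((W.get m).1, (W.get m).2) ∈ Rstr v := mem_Rstr (by omega) (by omega)
    simpa using hb
  constructor
  · exact sublist_flatten_replicate W (Rstr v) v hmem (by omega)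
  · intro hsub
    have hp := W_pairwise W hW
    have hp' : W.Pairwise (fun a b : ℕ × Bool => ¬ b.1 ≤ a.1) := by
      refine hp.imp ?_
      intro a b h
      omega
    have := length_le_of_sublist_flatten (fun a b : ℕ × Bool => b.1 ≤ a.1)
      (Rstr v) (Rstr_pairwise v) (v - 1) W hp' hsub
    omega
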